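/- arXiv:1303.0377 — 3 statements merged into one kernel-verified Lean document; each statement's English description precedes it below -/
import Mathlib

section
/- For all real α > 1, q = 2 - 1/α, and β = q^α·2^(α-1): α ≤ β. -/
open Real

/-- Bernoulli's inequality applied to `2 - 1/α = 1 + (1 - 1/α)`, since `1 + α (1 - 1/α) = α`. -/
theorem le_two_sub_inv_rpow_self {α : ℝ} (hα : 1 ≤ α) : α ≤ (2 - 1 / α) ^ α := by
  have hα0 : 0 < α := one_pos.trans_le hα
  have hinv : 1 / α ≤ 1 := (div_le_one hα0).2 hα
  have hbern : 1 + α * (1 - 1 / α) ≤ (1 + (1 - 1 / α)) ^ α :=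
    one_add_mul_self_le_rpow_one_add (by linarith) hα
  have hlhs : 1 + α * (1 - 1 / α) = α := by field_simp; ring
  have hbase : 1 + (1 - 1 / α) = 2 - 1 / α := by ring
  rwa [hlhs, hbase] at hbern

theorem stmt11 (α q β : ℝ) (hα : 1 < α)
    (hq : q = 2 - 1/α) (hβ : β = q ^ α * 2 ^ (α - 1)) :
    α ≤ β := by
  subst hq hβ
  have hq : α ≤ (2 - 1 / α) ^ α := le_two_sub_inv_rpow_self hα.le
  have htwo : (1 : ℝ) ≤ 2 ^ (α - 1) := one_le_rpow one_le_two (by linarith)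
  calc α = α * 1 := (mul_one α).symm
    _ ≤ (2 - 1 / α) ^ α * 2 ^ (α - 1) :=
      mul_le_mul hq htwo zero_le_one ((by linarith : (0 : ℝ) ≤ α).trans hq)
end

section
/- For all real α > 1, q = 2 - 1/α, β = q^α·2^(α-1), and all x ∈ [0,1]: q^α·(1+x)^α - β·q·(1+x) + α - 1 ≤ 0. -/
/-!
Write `A = q^α` and `s = q·2^(α-1)`, so that `β q = A s` and the left-hand side is
`A y^α - A s y + α - 1` at `y = 1 + x`. This is convex in `y`, so it lies below its chord
between `y = 1` and `y = 2`, and it suffices to check the two endpoints. Both follow from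
Bernoulli's inequality `2^α ≥ 1 + α`, which gives `s ≥ α`.
-/

open Real

lemma one_add_le_two_rpow {p : ℝ} (hp : 1 ≤ p) : 1 + p ≤ (2 : ℝ) ^ p := by
  simpa [one_add_one_eq_two] using one_add_mul_self_le_rpow_one_add (s := 1) (by norm_num) hp

lemma one_le_two_sub_inv {α : ℝ} (hα : 1 ≤ α) : 1 ≤ 2 - 1 / α := by
  have : 1 / α ≤ 1 := (div_le_one (by linarith)).2 hα
  linarith

lemma le_two_sub_inv_mul_two_rpow_sub_one {α : ℝ} (hα : 1 ≤ α) :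
    α ≤ (2 - 1 / α) * (2 : ℝ) ^ (α - 1) := by
  have hα0 : 0 < α := by linarith
  have hpow : (1 + α) / 2 ≤ (2 : ℝ) ^ (α - 1) := by
    rw [rpow_sub two_pos, rpow_one]
    linarith [one_add_le_two_rpow hα]
  calc α ≤ (2 - 1 / α) * ((1 + α) / 2) := by
        rw [← sub_nonneg]
        field_simp
        nlinarith
    _ ≤ (2 - 1 / α) * (2 : ℝ) ^ (α - 1) := by
        gcongr
        linarith [one_le_two_sub_inv hα]

lemma one_add_rpow_le_chord {p x : ℝ} (hp : 1 ≤ p) (hx0 : 0 ≤ x) (hx1 : x ≤ 1) :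
    (1 + x) ^ p ≤ (1 - x) + x * (2 : ℝ) ^ p := by
  have h := (convexOn_rpow hp).2 (Set.mem_Ici.2 zero_le_one) (Set.mem_Ici.2 zero_le_two)
    (sub_nonneg.2 hx1) hx0 (sub_add_cancel 1 x)
  simp only [smul_eq_mul, one_rpow, mul_one] at h
  rwa [show 1 - x + x * 2 = 1 + x by ring] at h

theorem stmt14 (α q β : ℝ) (hα : 1 < α)
    (hq : q = 2 - 1/α) (hβ : β = q ^ α * 2 ^ (α - 1)) :
    ∀ x : ℝ, 0 ≤ x → x ≤ 1 →
      q ^ α * (1 + x) ^ α - β * q * (1 + x) + α - 1 ≤ 0 := by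
  intro x hx0 hx1
  have hα0 : 0 < α := by linarith
  have hq1 : 1 ≤ q := hq ▸ one_le_two_sub_inv hα.le
  set A := q ^ α
  set s := q * (2 : ℝ) ^ (α - 1)
  have hA : 1 ≤ A := one_le_rpow hq1 hα0.le
  have hs : α ≤ s := by subst hq; exact le_two_sub_inv_mul_two_rpow_sub_one hα.le
  have hβq : β * q = A * s := by rw [hβ]; ring
  have h_left : A - A * s + α - 1 ≤ 0 := by nlinarith
  have h_right : A * 2 ^ α - A * s * 2 + α - 1 ≤ 0 := by
    have hAT : α ≤ A * 2 ^ α := by nlinarith [one_add_le_two_rpow hα.le]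
    have hs2 : s * 2 = q * 2 ^ α := by
      simp only [s]
      rw [rpow_sub two_pos, rpow_one]; ring
    have key : A * 2 ^ α - A * s * 2 + α - 1 = (α - 1) * (α - A * 2 ^ α) / α := by
      rw [mul_assoc A, hs2, hq]; field_simp; ring
    rw [key]
    exact div_nonpos_of_nonpos_of_nonneg (mul_nonpos_of_nonneg_of_nonpos (by linarith)
      (by linarith)) hα0.le
  rw [hβq]
  have h_chord := mul_le_mul_of_nonneg_left (one_add_rpow_le_chord hα.le hx0 hx1)
    (zero_le_one.trans hA)
  linarith [h_chord,
    mul_nonpos_of_nonneg_of_nonpos (sub_nonneg.2 hx1) h_left,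
    mul_nonpos_of_nonneg_of_nonpos hx0 h_right]
end

section
/- For every real α > 1, setting q = 2 - 1/α: for all reals g_0 > 0 and s_o ≥ 0, with β = c = q^α·2^(α-1), the inequality q^α·(g_0+s_o)^α - β·(q·α - (α-1))·g_0^α - β·α·(q-1)·g_0^(α-1)·s_o - c·s_o^α ≤ 0 holds. -/
open Real

/-!
With `q = 2 - 1/α` the coefficients collapse to `q α - (α - 1) = α` and `α (q - 1) = α - 1`,
so after dividing by `q ^ α * 2 ^ (α - 1)` the claim reads
`(g + s) ^ α / 2 ^ (α - 1) ≤ α g ^ α + (α - 1) g ^ (α - 1) s + s ^ α`.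
The left side is at most `g ^ α + s ^ α` by convexity of `t ↦ t ^ α`, and the extra terms on the
right are nonnegative.
-/

lemma Real.rpow_add_le_mul_rpow_add_rpow {a b p : ℝ} (ha : 0 ≤ a) (hb : 0 ≤ b) (hp : 1 ≤ p) :
    (a + b) ^ p ≤ 2 ^ (p - 1) * (a ^ p + b ^ p) := by
  lift a to NNReal using ha
  lift b to NNReal using hb
  exact_mod_cast NNReal.rpow_add_le_mul_rpow_add_rpow a b hp

lemma add_rpow_le_two_rpow_mul_of_one_le {α g s : ℝ} (hα : 1 ≤ α) (hg : 0 ≤ g) (hs : 0 ≤ s) :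
    (g + s) ^ α ≤ 2 ^ (α - 1) * (α * g ^ α + (α - 1) * g ^ (α - 1) * s + s ^ α) := by
  have hgα : g ^ α ≤ α * g ^ α := le_mul_of_one_le_left (rpow_nonneg hg α) hα
  have hcross : 0 ≤ (α - 1) * g ^ (α - 1) * s :=
    mul_nonneg (mul_nonneg (sub_nonneg.2 hα) (rpow_nonneg hg _)) hs
  calc (g + s) ^ α ≤ 2 ^ (α - 1) * (g ^ α + s ^ α) := rpow_add_le_mul_rpow_add_rpow hg hs hα
    _ ≤ 2 ^ (α - 1) * (α * g ^ α + (α - 1) * g ^ (α - 1) * s + s ^ α) := by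
      gcongr
      linarith

theorem stmt17 (α q β c : ℝ) (hα : 1 < α)
    (hq : q = 2 - 1/α) (hβ : β = q ^ α * 2 ^ (α - 1)) (hc : c = q ^ α * 2 ^ (α - 1)) :
    ∀ g₀ s_o : ℝ, 0 < g₀ → 0 ≤ s_o →
      q ^ α * (g₀ + s_o) ^ α - β * (q * α - (α - 1)) * g₀ ^ α
        - β * α * (q - 1) * g₀ ^ (α - 1) * s_o - c * s_o ^ α ≤ 0 := by
  intro g s hg hs
  have hq_mul : q * α - (α - 1) = α := by rw [hq]; field_simp; ring
  have hq_sub : α * (q - 1) = α - 1 := by rw [hq]; field_simp; ring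
  have hq_nonneg : 0 ≤ q := by
    rw [hq, sub_nonneg, div_le_iff₀ (by positivity)]
    linarith
  have key := mul_le_mul_of_nonneg_left
    (add_rpow_le_two_rpow_mul_of_one_le hα.le hg.le hs) (rpow_nonneg hq_nonneg α)
  calc q ^ α * (g + s) ^ α - β * (q * α - (α - 1)) * g ^ α
        - β * α * (q - 1) * g ^ (α - 1) * s - c * s ^ α
      = q ^ α * (g + s) ^ α
        - q ^ α * (2 ^ (α - 1) * (α * g ^ α + (α - 1) * g ^ (α - 1) * s + s ^ α)) := by
        rw [hβ, hc, hq_mul]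
        linear_combination -(q ^ α * 2 ^ (α - 1) * g ^ (α - 1) * s) * hq_sub
    _ ≤ 0 := sub_nonpos.2 key
end
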